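/- For a bounded Vilenkin sequence m and 1/2 < p ≤ 1, the double sum estimate (M_N / M_N^{2p}) ∑_{q=0}^{N-1} M_q^p ∑_{k=q}^{N-1} M_k^{p-1} ≤ c_p holds with a constant c_p depending only on p and the bound on m (not on N). -/

import Mathlib

open Complex Finset

noncomputable section

/-- The generalized number system: `M 0 = 1`, `M (k+1) = m k * M k`. -/
def Mf (m : ℕ → ℕ) : ℕ → ℕ
  | 0 => 1
  | k + 1 => m k * Mf m k

/-- The generalized Rademacher function `r_k(x) = exp(2πi x_k / m_k)`. -/
def rad (m : ℕ → ℕ) (k : ℕ) (x : ∀ j, ZMod (m j)) : ℂ :=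
  Complex.exp (2 * Real.pi * Complex.I * (x k).val / (m k))

/-- The Vilenkin function `ψ_n(x) = ∏ k, r_k(x)^{n_k}` where `n_k = (n / M_k) % m_k`
is the k-th digit of `n` in the generalized number system. -/
def psi (m : ℕ → ℕ) (n : ℕ) (x : ∀ j, ZMod (m j)) : ℂ :=
  ∏ k ∈ Finset.range (n + 1), rad m k x ^ ((n / Mf m k) % m k)

/-- Vilenkin Dirichlet kernel. -/
def Dker (m : ℕ → ℕ) (n : ℕ) (x : ∀ j, ZMod (m j)) : ℂ :=
  ∑ j ∈ Finset.range n, psi m j x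

/-- One-dimensional Vilenkin Fejér kernel. -/
def Fejer (m : ℕ → ℕ) (n : ℕ) (x : ∀ j, ZMod (m j)) : ℂ :=
  (n : ℂ)⁻¹ * ∑ k ∈ Finset.range n, Dker m k x

/-- Two-dimensional Marcinkiewicz–Fejér kernel. -/
def MKer (m : ℕ → ℕ) (n : ℕ) (x y : ∀ j, ZMod (m j)) : ℂ :=
  (n : ℂ)⁻¹ * ∑ k ∈ Finset.range n, Dker m k x * Dker m k y

/-- `e_s ∈ G_m`: the element whose s-th coordinate is 1 and all others are 0. -/
def evec (m : ℕ → ℕ) (s : ℕ) : ∀ j, ZMod (m j) :=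
  fun j => if j = s then 1 else 0

/-- `r_{i,n}(x,y) = ∏_{l=i}^{n} ∑_{s=0}^{m_l-1} ψ_{M_l}(x+y)^s`. -/
def rr (m : ℕ → ℕ) (i n : ℕ) (x y : ∀ j, ZMod (m j)) : ℂ :=
  ∏ l ∈ Finset.Icc i n, ∑ s ∈ Finset.range (m l), psi m (Mf m l) (x + y) ^ s

/-!
Since `M_k ≥ 2^(k-q) M_q` and `p - 1 ≤ 0`, the inner sum is at most `(N - q) M_q^(p-1)`, so the
`q`-th term is at most `(N - q) M_q^(2p-1) ≤ (N - q) r^(N-q) M_N^(2p-1)` with `r = 2^(1-2p)`.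
The prefactor `M_N^(1-2p)` cancels `M_N^(2p-1)`, and because `p > 1/2` we have `r < 1`, so the
whole expression is bounded by `∑ n r^n = r / (1 - r)^2`.
-/

theorem Mf_pos {m : ℕ → ℕ} (hm : ∀ k, 0 < m k) (k : ℕ) : 0 < Mf m k := by
  induction k with
  | zero => exact Nat.one_pos
  | succ k ih => exact Nat.mul_pos (hm k) ih

theorem Mf_mul_pow_sub_le {m : ℕ → ℕ} {a : ℕ} (hm : ∀ k, a ≤ m k) {q n : ℕ} (h : q ≤ n) :
    Mf m q * a ^ (n - q) ≤ Mf m n := by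
  induction n, h using Nat.le_induction with
  | base => simp
  | succ n hqn ih =>
    calc Mf m q * a ^ (n + 1 - q) = Mf m q * a ^ (n - q) * a := by
          rw [Nat.sub_add_comm hqn, pow_succ, mul_assoc]
      _ ≤ Mf m n * m n := Nat.mul_le_mul ih (hm n)
      _ = Mf m (n + 1) := Nat.mul_comm _ _

theorem sum_range_sub_mul_pow_sub_le {r : ℝ} (hr0 : 0 ≤ r) (hr1 : r < 1) (N : ℕ) :
    ∑ q ∈ range N, ((N - q : ℕ) : ℝ) * r ^ (N - q) ≤ r / (1 - r) ^ 2 := by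
  have hsum : HasSum (fun n : ℕ ↦ (n : ℝ) * r ^ n) (r / (1 - r) ^ 2) :=
    hasSum_coe_mul_geometric_of_norm_lt_one (by rwa [Real.norm_of_nonneg hr0])
  calc ∑ q ∈ range N, ((N - q : ℕ) : ℝ) * r ^ (N - q)
      = ∑ j ∈ range N, ((j + 1 : ℕ) : ℝ) * r ^ (j + 1) := by
        rw [← sum_range_reflect]
        refine sum_congr rfl fun j hj ↦ ?_
        rw [show N - (N - 1 - j) = j + 1 by have := mem_range.1 hj; omega]
    _ = ∑ n ∈ range (N + 1), (n : ℝ) * r ^ n := by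
        rw [sum_range_succ' _ N]; simp
    _ ≤ r / (1 - r) ^ 2 := sum_le_hasSum _ (fun n _ ↦ by positivity) hsum

theorem rpow_le_mul_rpow_neg_pow_of_mul_pow_le {x y a s : ℝ} (hx : 0 ≤ x) (ha : 0 < a)
    (hs : 0 ≤ s) {n : ℕ} (h : x * a ^ n ≤ y) :
    x ^ s ≤ y ^ s * (a ^ (-s)) ^ n := by
  have h' := Real.rpow_le_rpow (mul_nonneg hx (pow_nonneg ha.le n)) h hs
  rw [Real.mul_rpow hx (pow_nonneg ha.le n), ← Real.rpow_pow_comm ha.le] at h'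
  rwa [Real.rpow_neg ha.le, inv_pow, ← div_eq_mul_inv,
    le_div_iff₀ (pow_pos (Real.rpow_pos_of_pos ha s) n)]

section GrowingSequence

variable {M : ℕ → ℝ} {a p : ℝ}

theorem sum_Icc_rpow_le_of_monotone (hmono : Monotone M) (hp : p ≤ 1) {q N : ℕ} (hMq : 0 < M q)
    (hqN : q < N) :
    ∑ k ∈ Icc q (N - 1), M k ^ (p - 1) ≤ ((N - q : ℕ) : ℝ) * M q ^ (p - 1) := by
  calc ∑ k ∈ Icc q (N - 1), M k ^ (p - 1) ≤ ∑ _k ∈ Icc q (N - 1), M q ^ (p - 1) :=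
        sum_le_sum fun k hk ↦
          Real.rpow_le_rpow_of_nonpos hMq (hmono (mem_Icc.1 hk).1) (by linarith)
    _ = ((N - q : ℕ) : ℝ) * M q ^ (p - 1) := by
        rw [sum_const, nsmul_eq_mul, Nat.card_Icc, Nat.sub_add_cancel (by omega)]

theorem rpow_mul_rpow_mul_sum_Icc_rpow_le (hM : ∀ k, 0 < M k) (ha : 1 ≤ a)
    (hgrowth : ∀ q n, q ≤ n → M q * a ^ (n - q) ≤ M n) (hp1 : 1 / 2 < p) (hp2 : p ≤ 1)
    {q N : ℕ} (hqN : q < N) :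
    M N ^ (1 - 2 * p) * (M q ^ p * ∑ k ∈ Icc q (N - 1), M k ^ (p - 1)) ≤
      ((N - q : ℕ) : ℝ) * (a ^ (1 - 2 * p)) ^ (N - q) := by
  have hMq := hM q
  have hMN := hM N
  have hmono : Monotone M := monotone_nat_of_le_succ fun k ↦
    (le_mul_of_one_le_right (hM k).le ha).trans (by simpa using hgrowth k (k + 1) k.le_succ)
  have hinner := sum_Icc_rpow_le_of_monotone hmono hp2 hMq hqN
  have hgeom := rpow_le_mul_rpow_neg_pow_of_mul_pow_le hMq.le (by linarith) (s := 2 * p - 1)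
    (by linarith) (hgrowth q N hqN.le)
  have hcancel : M N ^ (1 - 2 * p) * M N ^ (2 * p - 1) = 1 := by
    rw [← Real.rpow_add hMN]; norm_num
  calc M N ^ (1 - 2 * p) * (M q ^ p * ∑ k ∈ Icc q (N - 1), M k ^ (p - 1))
      ≤ M N ^ (1 - 2 * p) * (M q ^ p * (((N - q : ℕ) : ℝ) * M q ^ (p - 1))) := by gcongr
    _ = ((N - q : ℕ) : ℝ) * (M N ^ (1 - 2 * p) * M q ^ (2 * p - 1)) := by
        rw [mul_left_comm (M q ^ p), ← Real.rpow_add hMq, show p + (p - 1) = 2 * p - 1 by ring]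
        ring
    _ ≤ ((N - q : ℕ) : ℝ) * (M N ^ (1 - 2 * p) * (M N ^ (2 * p - 1) *
          (a ^ (-(2 * p - 1))) ^ (N - q))) := by gcongr
    _ = ((N - q : ℕ) : ℝ) * (a ^ (1 - 2 * p)) ^ (N - q) := by
        rw [← mul_assoc (M N ^ _), hcancel, one_mul, neg_sub]

theorem rpow_mul_sum_rpow_mul_sum_Icc_rpow_le (hM : ∀ k, 0 < M k) (ha : 1 < a)
    (hgrowth : ∀ q n, q ≤ n → M q * a ^ (n - q) ≤ M n) (hp1 : 1 / 2 < p) (hp2 : p ≤ 1)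
    (N : ℕ) :
    M N ^ (1 - 2 * p) * ∑ q ∈ range N, M q ^ p * ∑ k ∈ Icc q (N - 1), M k ^ (p - 1) ≤
      a ^ (1 - 2 * p) / (1 - a ^ (1 - 2 * p)) ^ 2 := by
  rw [mul_sum]
  calc _ ≤ ∑ q ∈ range N, ((N - q : ℕ) : ℝ) * (a ^ (1 - 2 * p)) ^ (N - q) :=
        sum_le_sum fun q hq ↦
          rpow_mul_rpow_mul_sum_Icc_rpow_le hM ha.le hgrowth hp1 hp2 (mem_range.1 hq)
    _ ≤ _ := sum_range_sub_mul_pow_sub_le (by positivity)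
        (Real.rpow_lt_one_of_one_lt_of_neg ha (by linarith)) N

end GrowingSequence

theorem stmt13 (B : ℕ) (p : ℝ) (hp1 : 1 / 2 < p) (hp2 : p ≤ 1) :
    ∃ c : ℝ, 0 < c ∧ ∀ (m : ℕ → ℕ), (∀ k, 2 ≤ m k) → (∀ k, m k ≤ B) → ∀ N : ℕ,
      (Mf m N : ℝ) / (Mf m N : ℝ) ^ (2 * p) *
        ∑ q ∈ Finset.range N, (Mf m q : ℝ) ^ p *
          ∑ k ∈ Finset.Icc q (N - 1), (Mf m k : ℝ) ^ (p - 1) ≤ c := by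
  set r : ℝ := (2 : ℝ) ^ (1 - 2 * p)
  have hr1 : r < 1 := Real.rpow_lt_one_of_one_lt_of_neg one_lt_two (by linarith)
  refine ⟨r / (1 - r) ^ 2, div_pos (by positivity) (pow_pos (sub_pos.2 hr1) 2), fun m hm _ N ↦ ?_⟩
  have hM : ∀ k, (0 : ℝ) < Mf m k := fun k ↦ mod_cast Mf_pos (fun k ↦ by linarith [hm k]) k
  have hgrowth : ∀ q n, q ≤ n → (Mf m q : ℝ) * 2 ^ (n - q) ≤ Mf m n := fun q n h ↦
    mod_cast Mf_mul_pow_sub_le hm h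
  rw [← Real.rpow_one_sub' (hM N).le (by intro h; linarith)]
  exact rpow_mul_sum_rpow_mul_sum_Icc_rpow_le hM one_lt_two hgrowth hp1 hp2 N
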